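/- arXiv:0808.1787 — 9 statements merged into one kernel-verified Lean document; each statement's English description precedes it below -/
import Mathlib

section
/- Let G be a directed acyclic graph on a vertex set V of size n, let 0 < ε ≤ 1, and let H be a 2-TC-spanner of G. If f : V → ℝ is ε-far from monotone on G, then at least εn/2 edges (u,v) of H satisfy f(u) > f(v). -/
/-- There is a directed walk of length at most `k` from `u` to `v` in the digraph
with edge relation `E`. -/
def distLE {V : Type*} (E : V → V → Prop) : ℕ → V → V → Prop
  | 0 => fun u v => u = v
  | n + 1 => fun u v => u = v ∨ ∃ w, E u w ∧ distLE E n w v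

/-- `H` is a `k`-transitive-closure-spanner of the digraph `E`: every edge of `H` is an
edge of the transitive closure of `E`, and whenever `E` has a directed path from `u` to `v`,
`H` has one of length at most `k`. -/
def IsTCSpanner {V : Type*} (E H : V → V → Prop) (k : ℕ) : Prop :=
  (∀ u v, H u v → u ≠ v ∧ Relation.TransGen E u v) ∧
  (∀ u v, Relation.ReflTransGen E u v → distLE H k u v)

/-- If `G` is a DAG on `n` vertices, `H` is a 2-TC-spanner of `G`, and `f` is `ε`-far from
monotone on `G`, then at least `εn/2` edges of `H` are violated by `f`. -/
theorem stmt0 {V : Type} [Fintype V] (E : V → V → Prop)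
    (hacyclic : ∀ v : V, ¬ Relation.TransGen E v v)
    (n : ℕ) (hn : n = Fintype.card V)
    (ε : ℝ) (hε0 : 0 < ε) (hε1 : ε ≤ 1)
    (H : V → V → Prop) (hH : IsTCSpanner E H 2)
    (f : V → ℝ)
    (hfar : ∀ g : V → ℝ, (∀ u v : V, E u v → g u ≤ g v) →
      ε * n ≤ ({x : V | f x ≠ g x}).ncard) :
    ε * n / 2 ≤ ({p : V × V | H p.1 p.2 ∧ f p.2 < f p.1}).ncard := by
  classical
  set Viol : Set (V × V) := {p : V × V | H p.1 p.2 ∧ f p.2 < f p.1} with hViol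
  by_cases hne : Nonempty V
  case neg =>
    have : n = 0 := by
      rw [hn, Fintype.card_eq_zero_iff]
      exact ⟨fun v => hne ⟨v⟩⟩
    subst this
    simp only [Nat.cast_zero, mul_zero, zero_div]
    positivity
  obtain ⟨v0⟩ := hne
  set B : Set V := (Prod.fst '' Viol) ∪ (Prod.snd '' Viol) with hB
  have hcu : (Finset.univ : Finset V).Nonempty := ⟨v0, Finset.mem_univ _⟩
  set c : ℝ := Finset.univ.inf' hcu f with hc
  set T : V → Finset V :=
    fun x => Finset.univ.filter (fun u => u ∉ B ∧ Relation.ReflTransGen E u x) with hT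
  set g : V → ℝ := fun x => (insert c ((T x).image f)).max' (Finset.insert_nonempty _ _) with hg
  -- membership in B from violated edges
  have memB1 : ∀ u w, H u w → f w < f u → u ∈ B := fun u w h hf =>
    Or.inl ⟨(u, w), ⟨h, hf⟩, rfl⟩
  have memB2 : ∀ u w, H u w → f w < f u → w ∈ B := fun u w h hf =>
    Or.inr ⟨(u, w), ⟨h, hf⟩, rfl⟩
  -- key: f is monotone along paths between vertices not in B
  have key : ∀ u x, u ∉ B → x ∉ B → Relation.ReflTransGen E u x → f u ≤ f x := by
    intro u x hu hx hux
    rcases Relation.reflTransGen_iff_eq_or_transGen.mp hux with rfl | htg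
    · exact le_rfl
    · have h2 := hH.2 u x hux
      rcases h2 with rfl | ⟨w, hw, h1⟩
      · exact absurd htg (hacyclic u)
      rcases h1 with rfl | ⟨z, hz, h0⟩
      · by_contra hlt
        exact hu (memB1 u w hw (lt_of_not_ge hlt))
      · have hz : H w x := by rwa [show z = x from h0] at hz
        have h1 : f u ≤ f w := by
          by_contra hlt
          exact hu (memB1 u w hw (lt_of_not_ge hlt))
        have h2 : f w ≤ f x := by
          by_contra hlt
          exact hx (memB2 w x hz (lt_of_not_ge hlt))
        exact h1.trans h2
  -- g is monotone
  have hmono : ∀ u v : V, E u v → g u ≤ g v := by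
    intro u v huv
    apply Finset.max'_le
    intro a ha
    rcases Finset.mem_insert.mp ha with rfl | ha
    · exact Finset.le_max' _ _ (Finset.mem_insert_self _ _)
    · obtain ⟨w, hw, rfl⟩ := Finset.mem_image.mp ha
      have hw' := Finset.mem_filter.mp hw
      have : w ∈ T v := Finset.mem_filter.mpr ⟨Finset.mem_univ _,
        hw'.2.1, hw'.2.2.tail huv⟩
      exact Finset.le_max' _ _ (Finset.mem_insert_of_mem (Finset.mem_image_of_mem f this))
  -- g agrees with f outside B
  have hagree : ∀ x, x ∉ B → g x = f x := by
    intro x hx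
    apply le_antisymm
    · apply Finset.max'_le
      intro a ha
      rcases Finset.mem_insert.mp ha with rfl | ha
      · exact Finset.inf'_le f (Finset.mem_univ x)
      · obtain ⟨w, hw, rfl⟩ := Finset.mem_image.mp ha
        have hw' := Finset.mem_filter.mp hw
        exact key w x hw'.2.1 hx hw'.2.2
    · apply Finset.le_max'
      apply Finset.mem_insert_of_mem
      exact Finset.mem_image_of_mem f (Finset.mem_filter.mpr
        ⟨Finset.mem_univ _, hx, Relation.ReflTransGen.refl⟩)
  have hsub : {x : V | f x ≠ g x} ⊆ B := by
    intro x hx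
    by_contra hB'
    exact hx (hagree x hB').symm
  have h1 : ε * n ≤ ({x : V | f x ≠ g x}).ncard := hfar g hmono
  have h2 : ({x : V | f x ≠ g x}).ncard ≤ B.ncard :=
    Set.ncard_le_ncard hsub (Set.toFinite _)
  have h3 : B.ncard ≤ Viol.ncard + Viol.ncard := by
    calc B.ncard ≤ (Prod.fst '' Viol).ncard + (Prod.snd '' Viol).ncard :=
          Set.ncard_union_le _ _
      _ ≤ Viol.ncard + Viol.ncard :=
          Nat.add_le_add (Set.ncard_image_le (Set.toFinite _))
            (Set.ncard_image_le (Set.toFinite _))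
  have h4 : (({x : V | f x ≠ g x}).ncard : ℝ) ≤ 2 * Viol.ncard := by
    push_cast
    have := (Nat.cast_le (α := ℝ)).mpr (h2.trans h3)
    push_cast at this
    linarith
  linarith
end

section
/- Let H be a digraph on n ≥ 2 vertices and let ℓ ≥ 1 be an integer. Then there exists a set W of at most ⌈2n(ln n)/ℓ⌉ vertices of H such that for every ordered pair of vertices (u,v) with a directed path from u to v in H and with shortest-path distance d_H(u,v) ≥ ℓ, some directed path from u to v in H contains a vertex of W. -/
/-!
A pair `(u, v)` at distance `d ≥ ℓ` has at least `ℓ + 1` vertices between `u` and `v`: on a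
shortest path the distances to `v` run through `d, d - 1, …, 0`. A uniformly random `t`-tuple of
vertices misses such a set with probability at most `(1 - ℓ/n)^t < e^{-ℓt/n} ≤ n⁻²` once
`t ≥ 2n ln n / ℓ`, so a union bound over the at most `n²` pairs leaves a tuple hitting all of
them.
-/

open Finset

namespace distLE

variable {V : Type*} {E : V → V → Prop}

lemma refl : ∀ k (v : V), distLE E k v v
  | 0, _ => rfl
  | _ + 1, _ => Or.inl rfl

lemma succ {k : ℕ} {u v : V} (h : distLE E k u v) : distLE E (k + 1) u v := by
  induction k generalizing u with
  | zero => exact Or.inl h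
  | succ k ih =>
    rcases h with rfl | ⟨w, huw, hwv⟩
    · exact Or.inl rfl
    · exact Or.inr ⟨w, huw, ih hwv⟩

lemma mono {j k : ℕ} (hjk : j ≤ k) {u v : V} (h : distLE E j u v) : distLE E k u v := by
  induction hjk with
  | refl => exact h
  | step _ ih => exact ih.succ

lemma reflTransGen {k : ℕ} {u v : V} (h : distLE E k u v) : Relation.ReflTransGen E u v := by
  induction k generalizing u with
  | zero => exact h ▸ .refl
  | succ k ih =>
    rcases h with rfl | ⟨w, huw, hwv⟩
    · exact .refl
    · exact .head huw (ih hwv)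

lemma exists_of_reflTransGen {u v : V} (h : Relation.ReflTransGen E u v) :
    ∃ k, distLE E k u v := by
  induction h using Relation.ReflTransGen.head_induction_on with
  | refl => exact ⟨0, rfl⟩
  | head huw _ ih =>
    obtain ⟨k, hk⟩ := ih
    exact ⟨k + 1, Or.inr ⟨_, huw, hk⟩⟩

end distLE

/-- The distance `d_E(x, v)`, with the junk value `0` when `v` is not reachable from `x`. -/
noncomputable def hopDist {V : Type*} (E : V → V → Prop) (x v : V) : ℕ :=
  sInf {k | distLE E k x v}

namespace hopDist

variable {V : Type*} {E : V → V → Prop}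

lemma le_of_distLE {k : ℕ} {x v : V} (h : distLE E k x v) : hopDist E x v ≤ k :=
  Nat.sInf_le h

lemma distLE_self {x v : V} (h : Relation.ReflTransGen E x v) :
    distLE E (hopDist E x v) x v :=
  Nat.sInf_mem (distLE.exists_of_reflTransGen h)

lemma lt_of_not_distLE {k : ℕ} {x v : V} (h : Relation.ReflTransGen E x v)
    (hk : ¬ distLE E k x v) : k < hopDist E x v := by
  by_contra! hle
  exact hk ((distLE_self h).mono hle)

lemma exists_between_eq {u v : V} (huv : Relation.ReflTransGen E u v) {j : ℕ}
    (hj : j ≤ hopDist E u v) :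
    ∃ x, Relation.ReflTransGen E u x ∧ Relation.ReflTransGen E x v ∧ hopDist E x v = j := by
  induction hd : hopDist E u v generalizing u with
  | zero => exact ⟨u, .refl, huv, by omega⟩
  | succ d ih =>
    rcases hj.lt_or_eq with hjd | hjd
    · have hdist := distLE_self huv
      rw [hd] at hdist
      obtain ⟨w, huw, hwv⟩ : ∃ w, E u w ∧ distLE E d w v := by
        rcases hdist with rfl | step
        · have := le_of_distLE (distLE.refl (E := E) 0 u)
          omega
        · exact step
      have hw : hopDist E w v = d := by
        refine le_antisymm (le_of_distLE hwv) ?_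
        have := le_of_distLE (k := hopDist E w v + 1)
          (Or.inr ⟨w, huw, distLE_self hwv.reflTransGen⟩)
        omega
      obtain ⟨x, hwx, hxv, hx⟩ := ih hwv.reflTransGen (by omega) hw
      exact ⟨x, .head huw hwx, hxv, hx⟩
    · exact ⟨u, .refl, huv, hd ▸ hjd.symm⟩

lemma lt_card_between [Fintype V] [DecidableRel (Relation.ReflTransGen E)] {u v : V}
    (huv : Relation.ReflTransGen E u v) :
    hopDist E u v < #{x | Relation.ReflTransGen E u x ∧ Relation.ReflTransGen E x v} := by
  have hsurj : Set.SurjOn (hopDist E · v)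
      (({x | Relation.ReflTransGen E u x ∧ Relation.ReflTransGen E x v} : Finset V) : Set V)
      (range (hopDist E u v + 1)) := by
    intro j hj
    obtain ⟨x, hux, hxv, hx⟩ :=
      exists_between_eq huv (Nat.lt_succ_iff.mp (mem_range.mp hj))
    exact ⟨x, by simpa using ⟨hux, hxv⟩, hx⟩
  simpa using card_le_card_of_surjOn _ hsurj

end hopDist

lemma exists_hitting_finset {V ι : Type*} [Fintype V] [DecidableEq V] (f : ι → Finset V)
    (F : Finset ι) {ℓ t : ℕ} (hf : ∀ i ∈ F, ℓ ≤ #(f i))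
    (hF : #F * (Fintype.card V - ℓ) ^ t < Fintype.card V ^ t) :
    ∃ W : Finset V, #W ≤ t ∧ ∀ i ∈ F, ∃ x ∈ W, x ∈ f i := by
  let missing (i : ι) : Finset (Fin t → V) := Fintype.piFinset fun _ => (f i)ᶜ
  have hcard : #(F.biUnion missing) < #(univ : Finset (Fin t → V)) := calc
    #(F.biUnion missing) ≤ ∑ i ∈ F, #(missing i) := card_biUnion_le
    _ ≤ ∑ _i ∈ F, (Fintype.card V - ℓ) ^ t := by
      gcongr with i hi
      simp only [missing, Fintype.card_piFinset, prod_const, card_univ, Fintype.card_fin,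
        card_compl]
      gcongr
      exact hf i hi
    _ < #(univ : Finset (Fin t → V)) := by simpa using hF
  obtain ⟨g, -, hg⟩ := exists_mem_notMem_of_card_lt_card hcard
  refine ⟨univ.image g, card_image_le.trans (by simp), fun i hi => ?_⟩
  have : g ∉ missing i := fun h => hg (mem_biUnion.mpr ⟨i, hi, h⟩)
  simp only [missing, Fintype.mem_piFinset, mem_compl, not_forall, not_not] at this
  obtain ⟨j, hj⟩ := this
  exact ⟨g j, mem_image_of_mem g (mem_univ j), hj⟩

lemma sq_mul_sub_pow_lt_pow {n ℓ t : ℕ} (hℓ : 0 < ℓ) (hℓn : ℓ < n)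
    (ht : 2 * n * Real.log n / ℓ ≤ t) : n ^ 2 * (n - ℓ) ^ t < n ^ t := by
  have hn : (0 : ℝ) < n := by exact_mod_cast hℓ.trans hℓn
  have hℓ' : (0 : ℝ) < ℓ := by exact_mod_cast hℓ
  have hlog : 0 < Real.log n := Real.log_pos (by exact_mod_cast (by omega : 1 < n))
  have ht0 : t ≠ 0 := by
    rintro rfl
    have : 0 < 2 * n * Real.log n / ℓ := by positivity
    push_cast at ht
    linarith
  have hexp : (n : ℝ) ^ 2 ≤ Real.exp (ℓ / n * t) := by
    rw [← Real.exp_log (pow_pos hn 2), Real.log_pow, Real.exp_le_exp, div_mul_eq_mul_div,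
      le_div_iff₀ hn]
    rw [div_le_iff₀ hℓ'] at ht
    push_cast
    linarith
  have hstep : ((n - ℓ : ℕ) : ℝ) < n * Real.exp (-(ℓ / n)) := by
    have := Real.add_one_lt_exp (x := -(ℓ / n)) (neg_ne_zero.mpr (by positivity))
    rw [Nat.cast_sub hℓn.le]
    calc (n : ℝ) - ℓ = n * (-(ℓ / n) + 1) := by field_simp; ring
      _ < n * Real.exp (-(ℓ / n)) := by gcongr
  have : ((n ^ 2 * (n - ℓ) ^ t : ℕ) : ℝ) < (n ^ t : ℕ) := calc
    ((n ^ 2 * (n - ℓ) ^ t : ℕ) : ℝ) = (n : ℝ) ^ 2 * ((n - ℓ : ℕ) : ℝ) ^ t := by push_cast; rfl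
    _ < (n : ℝ) ^ 2 * (n * Real.exp (-(ℓ / n))) ^ t := by gcongr
    _ ≤ Real.exp (ℓ / n * t) * (n * Real.exp (-(ℓ / n))) ^ t := by gcongr
    _ = (n ^ t : ℕ) := by
      rw [mul_pow, ← Real.exp_nat_mul, mul_left_comm, ← Real.exp_add,
        show ℓ / n * t + t * -(ℓ / n) = (0 : ℝ) by ring, Real.exp_zero, mul_one]
      push_cast
      rfl
  exact_mod_cast this

theorem stmt4_general {V : Type} [Fintype V] (E : V → V → Prop)
    (n : ℕ) (hn : n = Fintype.card V)
    (ℓ : ℕ) (hℓ : 1 ≤ ℓ) :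
    ∃ W : Set V, W.ncard ≤ ⌈(2 * n * Real.log n) / ℓ⌉₊ ∧
      ∀ u v : V, Relation.ReflTransGen E u v → ¬ distLE E (ℓ - 1) u v →
        ∃ w ∈ W, Relation.ReflTransGen E u w ∧ Relation.ReflTransGen E w v := by
  classical
  let between (p : V × V) : Finset V :=
    {x | Relation.ReflTransGen E p.1 x ∧ Relation.ReflTransGen E x p.2}
  let far : Finset (V × V) :=
    {p | Relation.ReflTransGen E p.1 p.2 ∧ ¬ distLE E (ℓ - 1) p.1 p.2}
  have hbetween : ∀ p ∈ far, ℓ < #(between p) := by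
    intro p hp
    obtain ⟨hpath, hfar⟩ := (mem_filter.mp hp).2
    calc ℓ ≤ hopDist E p.1 p.2 := Nat.le_of_pred_lt (hopDist.lt_of_not_distLE hpath hfar)
      _ < #(between p) := hopDist.lt_card_between hpath
  obtain ⟨W, hWcard, hW⟩ : ∃ W : Finset V, #W ≤ ⌈(2 * n * Real.log n) / ℓ⌉₊ ∧
      ∀ p ∈ far, ∃ x ∈ W, x ∈ between p := by
    rcases far.eq_empty_or_nonempty with hempty | ⟨p, hp⟩
    · exact ⟨∅, by simp, by simp [hempty]⟩
    have hℓn : ℓ < n := hn ▸ (hbetween p hp).trans_le (card_le_univ _)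
    refine exists_hitting_finset between far (fun p hp => (hbetween p hp).le) (hn ▸ ?_)
    calc #far * (n - ℓ) ^ _ ≤ n ^ 2 * (n - ℓ) ^ _ := by
          gcongr
          simpa [hn, sq] using card_le_univ far
      _ < n ^ _ := sq_mul_sub_pow_lt_pow hℓ hℓn (Nat.le_ceil _)
  refine ⟨W, by simpa using hWcard, fun u v huv hfar => ?_⟩
  obtain ⟨x, hxW, hx⟩ := hW (u, v) (by simp [far, huv, hfar])
  exact ⟨x, hxW, by simpa [between] using hx⟩

/-- In any digraph `H` on `n ≥ 2` vertices there is a set `W` of at most `⌈2n(ln n)/ℓ⌉`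
vertices such that every ordered pair `(u,v)` joined by a directed path but at distance at
least `ℓ` has some directed path from `u` to `v` passing through a vertex of `W`. -/
theorem stmt4 {V : Type} [Fintype V] (E : V → V → Prop)
    (n : ℕ) (hn : n = Fintype.card V) (hn2 : 2 ≤ n)
    (ℓ : ℕ) (hℓ : 1 ≤ ℓ) :
    ∃ W : Set V, W.ncard ≤ ⌈(2 * n * Real.log n) / ℓ⌉₊ ∧
      ∀ u v : V, Relation.ReflTransGen E u v → ¬ distLE E (ℓ - 1) u v →
        ∃ w ∈ W, Relation.ReflTransGen E u w ∧ Relation.ReflTransGen E w v :=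
  stmt4_general E n hn ℓ hℓ
end

section
/- Let m ≥ 2 and k ≥ 1 be integers and let B(m,k) be the generalized butterfly graph. Let i ≥ 1 and ℓ ≥ 2 be integers with i + ℓ ≤ k+1, let x be a vertex in strip i, and let y be a vertex in strip i+ℓ. Then the number of ordered pairs (u,v) with u in strip 1, v in strip k+1, such that B(m,k) contains a directed path from u to x and a directed path from y to v, is at most m^{k−ℓ}; in particular it is at most m^{k−2} = n^{1−2/k}, where n = m^k. -/
/-- The generalized butterfly digraph `B(m,k)`: vertices are `{1,…,m}^k × {1,…,k+1}`
(strips are `0`-indexed here, so strip `i` of the paper corresponds to second coordinate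
`i - 1`), with an edge from `(u,t)` to `(v,t+1)` iff `u` and `v` agree on every coordinate
other than coordinate `t`. -/
def bfly (m k : ℕ) (x y : (Fin k → Fin m) × Fin (k + 1)) : Prop :=
  (y.2 : ℕ) = (x.2 : ℕ) + 1 ∧ ∀ j : Fin k, (j : ℕ) ≠ (x.2 : ℕ) → x.1 j = y.1 j

lemma bfly_reach_high {m k : ℕ} {a b : (Fin k → Fin m) × Fin (k + 1)}
    (h : Relation.ReflTransGen (bfly m k) a b) :
    (a.2 : ℕ) ≤ (b.2 : ℕ) ∧ ∀ j : Fin k, (b.2 : ℕ) ≤ (j : ℕ) → a.1 j = b.1 j := by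
  induction h with
  | refl => exact ⟨le_refl _, fun _ _ => rfl⟩
  | tail _ hedge ih =>
    obtain ⟨h1, h2⟩ := ih
    obtain ⟨he1, he2⟩ := hedge
    refine ⟨by omega, fun j hj => ?_⟩
    rw [h2 j (by omega), he2 j (by omega)]

lemma bfly_reach_low {m k : ℕ} {a b : (Fin k → Fin m) × Fin (k + 1)}
    (h : Relation.ReflTransGen (bfly m k) a b) :
    ∀ j : Fin k, (j : ℕ) < (a.2 : ℕ) → a.1 j = b.1 j := by
  induction h using Relation.ReflTransGen.head_induction_on with
  | refl => exact fun _ _ => rfl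
  | head hedge _ ih =>
    intro j hj
    obtain ⟨he1, he2⟩ := hedge
    rw [he2 j (by omega)]
    exact ih j (by omega)

/-- In the generalized butterfly `B(m,k)`, for a vertex `x` in strip `i` and a vertex `y` in
strip `i+ℓ` (with `i ≥ 1`, `ℓ ≥ 2`, `i+ℓ ≤ k+1`), the number of pairs `(u,v)` with `u` in
strip 1 reaching `x` and `v` in strip `k+1` reachable from `y` is at most `m^(k-ℓ)`, and in
particular at most `m^(k-2) = n^(1-2/k)`. -/
theorem stmt6 (m k : ℕ) (hm : 2 ≤ m) (hk : 1 ≤ k)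
    (i ℓ : ℕ) (hi : 1 ≤ i) (hℓ : 2 ≤ ℓ) (hiℓ : i + ℓ ≤ k + 1)
    (x y : (Fin k → Fin m) × Fin (k + 1))
    (hx : (x.2 : ℕ) = i - 1) (hy : (y.2 : ℕ) = i + ℓ - 1) :
    ({p : ((Fin k → Fin m) × Fin (k + 1)) × ((Fin k → Fin m) × Fin (k + 1)) |
        (p.1.2 : ℕ) = 0 ∧ (p.2.2 : ℕ) = k ∧
        Relation.ReflTransGen (bfly m k) p.1 x ∧
        Relation.ReflTransGen (bfly m k) y p.2}).ncard ≤ m ^ (k - ℓ) ∧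
    ({p : ((Fin k → Fin m) × Fin (k + 1)) × ((Fin k → Fin m) × Fin (k + 1)) |
        (p.1.2 : ℕ) = 0 ∧ (p.2.2 : ℕ) = k ∧
        Relation.ReflTransGen (bfly m k) p.1 x ∧
        Relation.ReflTransGen (bfly m k) y p.2}).ncard ≤ m ^ (k - 2) := by
  have key : ({p : ((Fin k → Fin m) × Fin (k + 1)) × ((Fin k → Fin m) × Fin (k + 1)) |
        (p.1.2 : ℕ) = 0 ∧ (p.2.2 : ℕ) = k ∧
        Relation.ReflTransGen (bfly m k) p.1 x ∧
        Relation.ReflTransGen (bfly m k) y p.2}).ncard ≤ m ^ (k - ℓ) := by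
    set f : ((Fin k → Fin m) × Fin (k + 1)) × ((Fin k → Fin m) × Fin (k + 1)) →
        (Fin (i - 1) → Fin m) × (Fin (k - (i + ℓ - 1)) → Fin m) :=
      fun p => (fun t => p.1.1 ⟨t, by have := t.isLt; omega⟩,
                fun t => p.2.1 ⟨i + ℓ - 1 + t, by have := t.isLt; omega⟩) with hf
    have hcard : (Set.univ : Set ((Fin (i - 1) → Fin m) ×
        (Fin (k - (i + ℓ - 1)) → Fin m))).ncard = m ^ (k - ℓ) := by
      rw [Set.ncard_univ, Nat.card_eq_fintype_card]
      simp only [Fintype.card_prod, Fintype.card_fun, Fintype.card_fin]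
      rw [← pow_add]
      congr 1
      omega
    rw [← hcard]
    apply Set.ncard_le_ncard_of_injOn f (fun _ _ => Set.mem_univ _) _ Set.finite_univ
    rintro ⟨⟨u, s0⟩, ⟨v, s1⟩⟩ ⟨hu0, hv0, hux, hyv⟩ ⟨⟨u', s0'⟩, ⟨v', s1'⟩⟩ ⟨hu0', hv0', hux', hyv'⟩ hpq
    simp only [Set.mem_setOf_eq] at hu0 hv0 hux hyv hu0' hv0' hux' hyv'
    have hA := (bfly_reach_high hux).2
    have hA' := (bfly_reach_high hux').2
    have hB := bfly_reach_low hyv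
    have hB' := bfly_reach_low hyv'
    simp only at hA hA' hB hB'
    have h1 := congrFun (congrArg Prod.fst hpq)
    have h2 := congrFun (congrArg Prod.snd hpq)
    simp only [hf] at h1 h2
    have hu : u = u' := by
      funext j
      by_cases hj : (j : ℕ) < i - 1
      · have := h1 ⟨(j : ℕ), hj⟩
        simpa using this
      · rw [hA j (by omega), hA' j (by omega)]
    have hv : v = v' := by
      funext j
      by_cases hj : (j : ℕ) < i + ℓ - 1
      · rw [← hB j (by omega), ← hB' j (by omega)]
      · have hjk := j.isLt
        have := h2 ⟨(j : ℕ) - (i + ℓ - 1), by omega⟩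
        simp only at this
        have hje : (⟨i + ℓ - 1 + ((j : ℕ) - (i + ℓ - 1)), by omega⟩ : Fin k) = j :=
          Fin.ext (by simp; omega)
        rwa [hje] at this
    have hs0 : s0 = s0' := Fin.ext (by omega)
    have hs1 : s1 = s1' := Fin.ext (by omega)
    simp [hu, hv, hs0, hs1]
  exact ⟨key, key.trans (Nat.pow_le_pow_right (by omega) (by omega))⟩
end

section
/- Let m ≥ 2 and k ≥ 2 be integers and let B(m,k) be the generalized butterfly graph with n = m^k vertices per strip. Let F be any set of edges of the transitive closure TC(B(m,k)) such that in the digraph B(m,k) ∪ F, every vertex u of strip 1 has a directed path of length at most k−1 to every vertex v of strip k+1. Then F contains at least m^{k+2} = n^{1+2/k} edges that are not edges of B(m,k). -/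
open Finset Relation

def BflyLE (m k : ℕ) (x y : (Fin k → Fin m) × Fin (k + 1)) : Prop :=
  (x.2 : ℕ) ≤ y.2 ∧ ∀ j : Fin k, ((j : ℕ) < x.2 ∨ (y.2 : ℕ) ≤ j) → x.1 j = y.1 j

theorem distLE.reflTransGen_s7 {V : Type*} {E : V → V → Prop} :
    ∀ {n : ℕ} {u v : V}, distLE E n u v → ReflTransGen E u v
  | 0, _, _, rfl => .refl
  | _ + 1, _, _, .inl rfl => .refl
  | _ + 1, _, _, .inr ⟨_, huw, hwv⟩ => .head huw hwv.reflTransGen_s7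

namespace BflyLE

variable {m k : ℕ}

instance : IsPreorder _ (BflyLE m k) where
  refl _ := ⟨le_rfl, fun _ _ => rfl⟩
  trans _ _ _ hxy hyz := ⟨hxy.1.trans hyz.1, fun j hj => by
    have := hxy.1; have := hyz.1
    exact (hxy.2 j (by omega)).trans (hyz.2 j (by omega))⟩

instance : DecidableRel (BflyLE m k) := fun _ _ => inferInstanceAs (Decidable (_ ∧ _))

theorem of_bfly {x y : (Fin k → Fin m) × Fin (k + 1)} (h : bfly m k x y) : BflyLE m k x y := by
  obtain ⟨hstrip, hcoord⟩ := h
  exact ⟨by omega, fun j hj => hcoord j (by omega)⟩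

theorem of_transGen {x y : (Fin k → Fin m) × Fin (k + 1)} (h : TransGen (bfly m k) x y) :
    BflyLE m k x y :=
  transGen_eq_self (r := BflyLE m k) ▸ TransGen.mono (fun _ _ => of_bfly) _ _ h

variable {F : Set (((Fin k → Fin m) × Fin (k + 1)) × ((Fin k → Fin m) × Fin (k + 1)))}

theorem of_bfly_or_mem (hF : ∀ e ∈ F, TransGen (bfly m k) e.1 e.2)
    {x y : (Fin k → Fin m) × Fin (k + 1)} (h : bfly m k x y ∨ (x, y) ∈ F) : BflyLE m k x y :=
  h.elim of_bfly fun hxy => of_transGen (hF _ hxy)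

theorem of_distLE (hF : ∀ e ∈ F, TransGen (bfly m k) e.1 e.2) {n : ℕ}
    {x y : (Fin k → Fin m) × Fin (k + 1)}
    (h : distLE (fun a b => bfly m k a b ∨ (a, b) ∈ F) n x y) : BflyLE m k x y :=
  reflTransGen_le_of_le (fun a b (hab : bfly m k a b ∨ (a, b) ∈ F) => of_bfly_or_mem hF hab) _ _
    h.reflTransGen_s7

end BflyLE

theorem exists_long_jump {m k : ℕ}
    {F : Set (((Fin k → Fin m) × Fin (k + 1)) × ((Fin k → Fin m) × Fin (k + 1)))}
    (hF : ∀ e ∈ F, TransGen (bfly m k) e.1 e.2) :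
    ∀ {n : ℕ} {u v : (Fin k → Fin m) × Fin (k + 1)},
      distLE (fun a b => bfly m k a b ∨ (a, b) ∈ F) n u v → (u.2 : ℕ) + n < v.2 →
      ∃ e ∈ {e ∈ F | ¬ bfly m k e.1 e.2}, (e.1.2 : ℕ) + 2 ≤ e.2.2 ∧
        BflyLE m k u e.1 ∧ BflyLE m k e.2 v
  | 0, _, _, rfl, hlt => by omega
  | _ + 1, _, _, .inl rfl, hlt => by omega
  | _ + 1, u, _, .inr ⟨w, huw, hwv⟩, hlt => by
    by_cases hjump : (u.2 : ℕ) + 2 ≤ w.2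
    · have hnb : ¬ bfly m k u w := fun h => absurd h.1 (by omega)
      exact ⟨(u, w), ⟨huw.resolve_left hnb, hnb⟩, hjump, refl_of _ u, BflyLE.of_distLE hF hwv⟩
    · have huw' := BflyLE.of_bfly_or_mem hF huw
      obtain ⟨e, he, hje, hue, hev⟩ := exists_long_jump hF hwv (by have := huw'.1; omega)
      exact ⟨e, he, hje, _root_.trans huw' hue, hev⟩

theorem card_bflyLE_pairs_le {m k : ℕ} (a b : (Fin k → Fin m) × Fin (k + 1)) :
    #{p : (Fin k → Fin m) × (Fin k → Fin m) |
        BflyLE m k (p.1, 0) a ∧ BflyLE m k b (p.2, Fin.last k)} ≤ m ^ (a.2 + (k - b.2)) := by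
  have ha : (a.2 : ℕ) ≤ k := Nat.lt_succ_iff.1 a.2.isLt
  have hb : (b.2 : ℕ) ≤ k := Nat.lt_succ_iff.1 b.2.isLt
  -- `a` fixes the coordinates of `s` from `a.2` on, and `b` those of `t` below `b.2`.
  calc _ ≤ #(univ : Finset ((Fin a.2 → Fin m) × (Fin (k - b.2) → Fin m))) := by
        refine card_le_card_of_injOn
          (fun p => (fun i => p.1 ⟨i, by omega⟩, fun i => p.2 ⟨b.2 + i, by omega⟩))
          (fun _ _ => mem_coe.2 (mem_univ _)) ?_
        rintro ⟨s, t⟩ hst ⟨s', t'⟩ hst' heq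
        simp only [coe_filter, mem_univ, true_and] at hst hst'
        obtain ⟨hs, ht⟩ := Prod.ext_iff.1 heq
        refine Prod.ext (funext fun j => ?_) (funext fun j => ?_)
        · by_cases hj : (j : ℕ) < a.2
          · exact congrFun hs ⟨j, hj⟩
          · exact (hst.1.2 j (.inr (by omega))).trans (hst'.1.2 j (.inr (by omega))).symm
        · by_cases hj : (b.2 : ℕ) ≤ j
          · simpa [Nat.add_sub_cancel' hj] using congrFun ht ⟨j - b.2, by omega⟩
          · exact (hst.2.2 j (.inl (by omega))).symm.trans (hst'.2.2 j (.inl (by omega)))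
    _ = m ^ (a.2 + (k - b.2)) := by simp [pow_add]

def Serves (m k : ℕ) (e : ((Fin k → Fin m) × Fin (k + 1)) × ((Fin k → Fin m) × Fin (k + 1)))
    (p : (Fin k → Fin m) × (Fin k → Fin m)) : Prop :=
  (e.1.2 : ℕ) + 2 ≤ e.2.2 ∧ BflyLE m k (p.1, 0) e.1 ∧ BflyLE m k e.2 (p.2, Fin.last k)

instance {m k : ℕ} : DecidableRel (Serves m k) := fun _ _ => inferInstanceAs (Decidable (_ ∧ _))

theorem card_serves_le {m k : ℕ} (hm : 1 ≤ m)
    (e : ((Fin k → Fin m) × Fin (k + 1)) × ((Fin k → Fin m) × Fin (k + 1))) :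
    #{p | Serves m k e p} ≤ m ^ (k - 2) := by
  by_cases hjump : (e.1.2 : ℕ) + 2 ≤ e.2.2
  · have := e.2.2.isLt
    calc _ = #{p : (Fin k → Fin m) × (Fin k → Fin m) |
            BflyLE m k (p.1, 0) e.1 ∧ BflyLE m k e.2 (p.2, Fin.last k)} := by
          simp only [Serves, hjump, true_and]
      _ ≤ m ^ (e.1.2 + (k - e.2.2)) := card_bflyLE_pairs_le _ _
      _ ≤ m ^ (k - 2) := Nat.pow_le_pow_right hm (by omega)
  · simp [Serves, hjump]

/-- If adding a set `F` of transitive-closure edges to the generalized butterfly `B(m,k)`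
brings every strip-1 vertex within distance `k-1` of every strip-`(k+1)` vertex, then `F`
contains at least `m^(k+2) = n^(1+2/k)` edges that are not butterfly edges. -/
theorem stmt7 (m k : ℕ) (hm : 2 ≤ m) (hk : 2 ≤ k)
    (F : Set (((Fin k → Fin m) × Fin (k + 1)) × ((Fin k → Fin m) × Fin (k + 1))))
    (hF : ∀ e ∈ F, e.1 ≠ e.2 ∧ Relation.TransGen (bfly m k) e.1 e.2)
    (hreach : ∀ u v : (Fin k → Fin m) × Fin (k + 1), (u.2 : ℕ) = 0 → (v.2 : ℕ) = k →
      distLE (fun a b => bfly m k a b ∨ (a, b) ∈ F) (k - 1) u v) :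
    m ^ (k + 2) ≤ ({e ∈ F | ¬ bfly m k e.1 e.2}).ncard := by
  have hfin := Set.toFinite {e ∈ F | ¬ bfly m k e.1 e.2}
  have hserved (p : (Fin k → Fin m) × (Fin k → Fin m)) (_ : p ∈ univ) :
      1 ≤ #(hfin.toFinset.bipartiteAbove (fun p e => Serves m k e p) p) := by
    obtain ⟨e, he, hep⟩ := exists_long_jump (fun e he => (hF e he).2)
      (hreach (p.1, 0) (p.2, Fin.last k) rfl (Fin.val_last k))
      (by simp only [Fin.val_zero, Fin.val_last]; omega)
    exact card_pos.2 ⟨e, (mem_bipartiteAbove _).2 ⟨hfin.mem_toFinset.2 he, hep⟩⟩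
  have hcount := card_mul_le_card_mul _ hserved fun e _ => card_serves_le (by omega) e
  simp only [card_univ, Fintype.card_prod, Fintype.card_fun, Fintype.card_fin] at hcount
  rw [Set.ncard_eq_toFinset_card _ hfin]
  refine Nat.le_of_mul_le_mul_right ?_ (pow_pos (by omega : 0 < m) (k - 2))
  calc m ^ (k + 2) * m ^ (k - 2) = m ^ k * m ^ k * 1 := by
        rw [mul_one, ← pow_add, ← pow_add]; congr 1; omega
    _ ≤ _ := hcount
end

section
/- Let G be a digraph on n vertices containing a directed path P = (p_1, p_2, …, p_m) (with an edge from p_i to p_{i+1} for each 1 ≤ i < m). Then there exists a set S of at most 2n(⌊log₂ m⌋ + 2) edges of TC(G) such that for every pair of vertices (u,v): if G contains a directed path from u to v that intersects P, then the digraph G ∪ S contains a directed path from u to v of length at most 2. -/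
/-!
For a vertex `u` let `x` be the first index of `P` reachable from `u`, and for a vertex `v` let `y`
be the last index of `P` from which `v` is reachable; if some path from `u` to `v` meets `P`, then
`x ≤ y`. Call an index `h` a level-`ℓ` hub when `2 ^ ℓ ∣ h + 1`. If `ℓ` is the highest bit in which
`x` and `y + 1` differ, then `⌊x / 2^ℓ⌋ + 1 = ⌊(y + 1) / 2^ℓ⌋`, so the first level-`ℓ` hub after `x`
is also the last one before `y`, and `2 ^ ℓ ≤ m`. Hence it suffices to join every vertex to the
first hub after its entry point, and the last hub before its exit point to the vertex, on each of
the `log₂ m + 1` levels: at most `2n(log₂ m + 1)` edges of the transitive closure.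
-/

open Relation

namespace Nat

theorem exists_div_two_pow_add_one_eq {s t : ℕ} (h : s < t) : ∃ ℓ, s / 2 ^ ℓ + 1 = t / 2 ^ ℓ := by
  induction t using Nat.strong_induction_on generalizing s with
  | _ t ih =>
    by_cases hhalf : s / 2 = t / 2
    · exact ⟨0, by simp only [pow_zero, Nat.div_one]; omega⟩
    · obtain ⟨ℓ, hℓ⟩ := ih (t / 2) (by omega) (s := s / 2) (by omega)
      refine ⟨ℓ + 1, ?_⟩
      simpa only [Nat.div_div_eq_div_mul, ← pow_succ'] using hℓ

end Nat

/- `outHub i ℓ` is the least index `h ≥ i` with `2 ^ ℓ ∣ h + 1`, and `inHub j ℓ` the greatest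
`h ≤ j` with `2 ^ ℓ ∣ h + 1` (junk value `0` when `j + 1 < 2 ^ ℓ`). -/
def outHub (i ℓ : ℕ) : ℕ := (i / 2 ^ ℓ + 1) * 2 ^ ℓ - 1

def inHub (j ℓ : ℕ) : ℕ := (j + 1) / 2 ^ ℓ * 2 ^ ℓ - 1

theorem le_outHub (i ℓ : ℕ) : i ≤ outHub i ℓ := by
  have := Nat.lt_div_mul_add (a := i) (Nat.two_pow_pos ℓ)
  unfold outHub; rw [add_one_mul]; omega

theorem inHub_le (j ℓ : ℕ) : inHub j ℓ ≤ j := by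
  have := Nat.div_mul_le_self (j + 1) (2 ^ ℓ)
  unfold inHub; omega

theorem exists_outHub_eq_inHub {i j : ℕ} (hij : i ≤ j) :
    ∃ ℓ, 2 ^ ℓ ≤ j + 1 ∧ outHub i ℓ = inHub j ℓ := by
  obtain ⟨ℓ, hℓ⟩ := Nat.exists_div_two_pow_add_one_eq (Nat.lt_succ_of_le hij)
  refine ⟨ℓ, ?_, by rw [outHub, inHub, hℓ]⟩
  have := Nat.div_mul_le_self (j + 1) (2 ^ ℓ)
  rw [← hℓ, add_one_mul] at this
  omega

theorem distLE_two_of_reflGen {V : Type*} {H : V → V → Prop} {u w v : V}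
    (huw : ReflGen H u w) (hwv : ReflGen H w v) : distLE H 2 u v := by
  cases huw with
  | refl =>
    cases hwv with
    | refl => exact Or.inl rfl
    | single h => exact Or.inr ⟨v, h, Or.inl rfl⟩
  | single huw =>
    refine Or.inr ⟨w, huw, ?_⟩
    cases hwv with
    | refl => exact Or.inl rfl
    | single h => exact Or.inr ⟨v, h, rfl⟩

theorem reflGen_inter_transGen_of_mem {V : Type*} {E : V → V → Prop} {T : Set (V × V)} {a b : V}
    (hab : ReflTransGen E a b) (hT : (a, b) ∈ T) :
    ReflGen (fun a b => E a b ∨ (a, b) ∈ T ∩ {e | e.1 ≠ e.2 ∧ TransGen E e.1 e.2}) a b := by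
  by_cases hab' : a = b
  · exact hab' ▸ ReflGen.refl
  · have h := (reflTransGen_iff_eq_or_transGen.mp hab).resolve_left (Ne.symm hab')
    exact ReflGen.single (Or.inr ⟨hT, hab', h⟩)

section HubEdges

variable {V : Type*} (E : V → V → Prop) (q : ℕ → V) (m : ℕ)

theorem reflTransGen_of_path (hq : ∀ i, i + 1 < m → E (q i) (q (i + 1))) {i j : ℕ}
    (hij : i ≤ j) (hj : j < m) : ReflTransGen E (q i) (q j) :=
  (reflTransGen_of_succ_of_le (fun a b => E (q a) (q b))
    (fun k hk => by rw [Order.succ_eq_add_one]; exact hq k (by grind)) hij).lift q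
    fun _ _ h => h

noncomputable def entryIndex (u : V) : ℕ := sInf {i | i < m ∧ ReflTransGen E u (q i)}

noncomputable def exitIndex (v : V) : ℕ := sSup {i | i < m ∧ ReflTransGen E (q i) v}

variable {E q m}

theorem entryIndex_spec {u : V} {i : ℕ} (hi : i < m) (hu : ReflTransGen E u (q i)) :
    entryIndex E q m u ≤ i ∧ ReflTransGen E u (q (entryIndex E q m u)) := by
  have hmem : i ∈ {j | j < m ∧ ReflTransGen E u (q j)} := ⟨hi, hu⟩
  exact ⟨Nat.sInf_le hmem, (Nat.sInf_mem ⟨i, hmem⟩).2⟩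

theorem exitIndex_spec {v : V} {i : ℕ} (hi : i < m) (hv : ReflTransGen E (q i) v) :
    i ≤ exitIndex E q m v ∧ exitIndex E q m v < m ∧ ReflTransGen E (q (exitIndex E q m v)) v := by
  have hmem : i ∈ {j | j < m ∧ ReflTransGen E (q j) v} := ⟨hi, hv⟩
  have hbdd : BddAbove {j | j < m ∧ ReflTransGen E (q j) v} := ⟨m, fun _ h => h.1.le⟩
  exact ⟨le_csSup hbdd hmem, Nat.sSup_mem ⟨i, hmem⟩ hbdd⟩

variable (E q m)

def hubEdges : Set (V × V) :=
  ((Set.range fun x : V × Fin (Nat.log 2 m + 1) => (x.1, q (outHub (entryIndex E q m x.1) x.2))) ∪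
    Set.range fun x : V × Fin (Nat.log 2 m + 1) => (q (inHub (exitIndex E q m x.1) x.2), x.1)) ∩
  {e | e.1 ≠ e.2 ∧ TransGen E e.1 e.2}

theorem ncard_hubEdges_le [Finite V] :
    (hubEdges E q m).ncard ≤ 2 * Nat.card V * (Nat.log 2 m + 1) := by
  have hrange (f : V × Fin (Nat.log 2 m + 1) → V × V) :
      (Set.range f).ncard ≤ Nat.card V * (Nat.log 2 m + 1) := by
    rw [← Set.image_univ]
    refine (Set.ncard_image_le (Set.toFinite _)).trans_eq ?_
    rw [Set.ncard_univ, Nat.card_prod, Nat.card_fin]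
  refine (Set.ncard_le_ncard Set.inter_subset_left).trans ((Set.ncard_union_le _ _).trans ?_)
  rw [two_mul, add_mul]
  exact add_le_add (hrange _) (hrange _)

theorem distLE_hubEdges (hq : ∀ i, i + 1 < m → E (q i) (q (i + 1))) {u v : V} {i : ℕ}
    (hi : i < m) (hu : ReflTransGen E u (q i)) (hv : ReflTransGen E (q i) v) :
    distLE (fun a b => E a b ∨ (a, b) ∈ hubEdges E q m) 2 u v := by
  obtain ⟨hxi, hux⟩ := entryIndex_spec hi hu
  obtain ⟨hiy, hym, hyv⟩ := exitIndex_spec hi hv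
  set x := entryIndex E q m u
  set y := exitIndex E q m v
  obtain ⟨ℓ, hℓy, hhub⟩ := exists_outHub_eq_inHub (hxi.trans hiy)
  have hℓ : ℓ < Nat.log 2 m + 1 :=
    Nat.lt_succ_of_le ((Nat.le_log_iff_pow_le one_lt_two (by omega)).mpr (by omega))
  have hhy : inHub y ℓ ≤ y := inHub_le y ℓ
  have hxh : x ≤ outHub x ℓ := le_outHub x ℓ
  refine distLE_two_of_reflGen (w := q (outHub x ℓ))
    (reflGen_inter_transGen_of_mem
      (hux.trans (reflTransGen_of_path E q m hq hxh (by omega))) (Or.inl ⟨(u, ⟨ℓ, hℓ⟩), rfl⟩))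
    (reflGen_inter_transGen_of_mem
      ((reflTransGen_of_path E q m hq (by omega) hym).trans hyv)
      (Or.inr ⟨(v, ⟨ℓ, hℓ⟩), by rw [hhub]⟩))

end HubEdges

theorem stmt10_general {V : Type} [Fintype V] (E : V → V → Prop)
    (n : ℕ) (hn : n = Fintype.card V)
    (m : ℕ) (hm : 1 ≤ m) (p : Fin m → V)
    (hpath : ∀ (i : ℕ) (h : i + 1 < m), E (p ⟨i, Nat.lt_of_succ_lt h⟩) (p ⟨i + 1, h⟩)) :
    ∃ S : Set (V × V), S.ncard ≤ 2 * n * (Nat.log 2 m + 2) ∧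
      (∀ e ∈ S, e.1 ≠ e.2 ∧ Relation.TransGen E e.1 e.2) ∧
      ∀ u v : V,
        (∃ i : Fin m, Relation.ReflTransGen E u (p i) ∧ Relation.ReflTransGen E (p i) v) →
        distLE (fun a b => E a b ∨ (a, b) ∈ S) 2 u v := by
  set q : ℕ → V := fun i => if h : i < m then p ⟨i, h⟩ else p ⟨0, hm⟩
  have hq_fin (i : Fin m) : q i = p i := dif_pos i.isLt
  have hq (i : ℕ) (h : i + 1 < m) : E (q i) (q (i + 1)) := by
    simpa only [q, dif_pos h, dif_pos (Nat.lt_of_succ_lt h)] using hpath i h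
  refine ⟨hubEdges E q m, ?_, fun e he => he.2, ?_⟩
  · calc (hubEdges E q m).ncard ≤ 2 * n * (Nat.log 2 m + 1) := by
          simpa only [hn, Nat.card_eq_fintype_card] using ncard_hubEdges_le E q m
      _ ≤ 2 * n * (Nat.log 2 m + 2) := by gcongr; omega
  · rintro u v ⟨i, hu, hv⟩
    rw [← hq_fin] at hu hv
    exact distLE_hubEdges E q m hq i.isLt hu hv

/-- If a digraph `G` on `n` vertices contains a directed path `P = (p 0, …, p (m-1))`, then
there is a set `S` of at most `2n(⌊log₂ m⌋ + 2)` transitive-closure edges of `G` such that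
every pair `(u,v)` joined in `G` by a directed path meeting `P` is joined in `G ∪ S` by a
directed path of length at most `2`. -/
theorem stmt10 {V : Type} [Fintype V] (E : V → V → Prop)
    (n : ℕ) (hn : n = Fintype.card V)
    (m : ℕ) (hm : 1 ≤ m) (p : Fin m → V) (hinj : Function.Injective p)
    (hpath : ∀ (i : ℕ) (h : i + 1 < m), E (p ⟨i, Nat.lt_of_succ_lt h⟩) (p ⟨i + 1, h⟩)) :
    ∃ S : Set (V × V), S.ncard ≤ 2 * n * (Nat.log 2 m + 2) ∧
      (∀ e ∈ S, e.1 ≠ e.2 ∧ Relation.TransGen E e.1 e.2) ∧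
      ∀ u v : V,
        (∃ i : Fin m, Relation.ReflTransGen E u (p i) ∧ Relation.ReflTransGen E (p i) v) →
        distLE (fun a b => E a b ∨ (a, b) ∈ S) 2 u v :=
  stmt10_general E n hn m hm p hpath
end

section
/- Let G₁ and G₂ be digraphs with n₁ and n₂ vertices respectively, and let k ≥ 1 be an integer. Then the product digraph G₁ × G₂ has a k-TC-spanner of size at most S_k(G₁)·S_k(G₂) + n₁·S_k(G₂) + n₂·S_k(G₁); that is, S_k(G₁ × G₂) ≤ S_k(G₁)·S_k(G₂) + n₁·S_k(G₂) + n₂·S_k(G₁). -/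
/-- `Sk E k` : the minimum number of edges of a `k`-TC-spanner of the digraph `E`. -/
noncomputable def Sk {V : Type*} (E : V → V → Prop) (k : ℕ) : ℕ :=
  sInf {n | ∃ H : V → V → Prop, IsTCSpanner E H k ∧ ({p : V × V | H p.1 p.2}).ncard = n}

/-- The product of two digraphs: edge from `(u,v)` to `(u',v')` iff `u = u'` and `(v,v')`
is an edge of `G₂`, or `v = v'` and `(u,u')` is an edge of `G₁`. -/
def prodDigraph {V₁ V₂ : Type*} (E₁ : V₁ → V₁ → Prop) (E₂ : V₂ → V₂ → Prop)
    (x y : V₁ × V₂) : Prop :=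
  (x.1 = y.1 ∧ E₂ x.2 y.2) ∨ (x.2 = y.2 ∧ E₁ x.1 y.1)

/-!
Take optimal `k`-TC-spanners `H₁` of `G₁` and `H₂` of `G₂`, and let `H` consist of the edges
of the product digraph `H₁ × H₂` together with the "diagonal" edges `(u, v) → (u', v')` with
`u → u'` in `H₁` and `v → v'` in `H₂`. A path from `(u, v)` to `(u', v')` in `G₁ × G₂` projects
to paths in `G₁` and `G₂`, which `H₁` and `H₂` shortcut to length at most `k`; walking both
shortcuts simultaneously along diagonal edges, and along product edges once one of them has
ended, gives a path of length at most `k` in `H`. The product edges number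
`n₁·|H₂| + n₂·|H₁|` and the diagonal ones `|H₁|·|H₂|`.
-/

open Relation Set

variable {V W V₁ V₂ : Type*}

lemma distLE_refl (E : V → V → Prop) (n : ℕ) (v : V) : distLE E n v v := by
  cases n with
  | zero => rfl
  | succ n => exact Or.inl rfl

lemma distLE.map {E : V → V → Prop} {F : W → W → Prop} (f : V → W)
    (hf : ∀ u v, E u v → F (f u) (f v)) :
    ∀ {n u v}, distLE E n u v → distLE F n (f u) (f v)
  | 0, _, _, h => congrArg f h
  | _ + 1, _, _, Or.inl h => Or.inl (congrArg f h)
  | _ + 1, _, _, Or.inr ⟨w, hw, h⟩ => Or.inr ⟨f w, hf _ _ hw, distLE.map f hf h⟩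

def prodSpanner (H₁ : V₁ → V₁ → Prop) (H₂ : V₂ → V₂ → Prop) (x y : V₁ × V₂) : Prop :=
  prodDigraph H₁ H₂ x y ∨ (H₁ x.1 y.1 ∧ H₂ x.2 y.2)

lemma distLE_prodSpanner {H₁ : V₁ → V₁ → Prop} {H₂ : V₂ → V₂ → Prop} :
    ∀ {n u u' v v'}, distLE H₁ n u u' → distLE H₂ n v v' →
      distLE (prodSpanner H₁ H₂) n (u, v) (u', v')
  | 0, _, _, _, _, rfl, rfl => rfl
  | _ + 1, u, _, _, _, Or.inl rfl, h₂ =>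
    h₂.map (u, ·) fun _ _ h => Or.inl (Or.inl ⟨rfl, h⟩)
  | _ + 1, _, _, v, _, h₁@(Or.inr _), Or.inl rfl =>
    h₁.map (·, v) fun _ _ h => Or.inl (Or.inr ⟨rfl, h⟩)
  | _ + 1, _, _, _, _, Or.inr ⟨w₁, hw₁, h₁⟩, Or.inr ⟨w₂, hw₂, h₂⟩ =>
    Or.inr ⟨(w₁, w₂), Or.inr ⟨hw₁, hw₂⟩, distLE_prodSpanner h₁ h₂⟩

lemma transGen_prodDigraph_left {E₁ : V₁ → V₁ → Prop} (E₂ : V₂ → V₂ → Prop) {u u' : V₁}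
    (v : V₂) (h : TransGen E₁ u u') : TransGen (prodDigraph E₁ E₂) (u, v) (u', v) :=
  TransGen.lift (·, v) (fun _ _ h => Or.inr ⟨rfl, h⟩) _ _ h

lemma transGen_prodDigraph_right (E₁ : V₁ → V₁ → Prop) {E₂ : V₂ → V₂ → Prop} (u : V₁)
    {v v' : V₂} (h : TransGen E₂ v v') : TransGen (prodDigraph E₁ E₂) (u, v) (u, v') :=
  TransGen.lift (u, ·) (fun _ _ h => Or.inl ⟨rfl, h⟩) _ _ h

lemma Relation.ReflTransGen.prodDigraph_fst {E₁ : V₁ → V₁ → Prop} {E₂ : V₂ → V₂ → Prop}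
    {x y : V₁ × V₂} (h : ReflTransGen (prodDigraph E₁ E₂) x y) : ReflTransGen E₁ x.1 y.1 :=
  ReflTransGen.lift' Prod.fst (fun a b hab => show ReflTransGen E₁ a.1 b.1 from
    hab.elim (fun h => h.1 ▸ .refl) (fun h => .single h.2)) _ _ h

lemma Relation.ReflTransGen.prodDigraph_snd {E₁ : V₁ → V₁ → Prop} {E₂ : V₂ → V₂ → Prop}
    {x y : V₁ × V₂} (h : ReflTransGen (prodDigraph E₁ E₂) x y) : ReflTransGen E₂ x.2 y.2 :=
  ReflTransGen.lift' Prod.snd (fun a b hab => show ReflTransGen E₂ a.2 b.2 from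
    hab.elim (fun h => .single h.2) (fun h => h.1 ▸ .refl)) _ _ h

lemma IsTCSpanner.prodSpanner {E₁ H₁ : V₁ → V₁ → Prop} {E₂ H₂ : V₂ → V₂ → Prop} {k : ℕ}
    (h₁ : IsTCSpanner E₁ H₁ k) (h₂ : IsTCSpanner E₂ H₂ k) :
    IsTCSpanner (prodDigraph E₁ E₂) (prodSpanner H₁ H₂) k := by
  refine ⟨?_, fun x y h => distLE_prodSpanner (h₁.2 _ _ h.prodDigraph_fst)
    (h₂.2 _ _ h.prodDigraph_snd)⟩
  rintro ⟨u, v⟩ ⟨u', v'⟩ ((⟨rfl, h⟩ | ⟨rfl, h⟩) | ⟨h, h'⟩)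
  · obtain ⟨hne, ht⟩ := h₂.1 _ _ h
    exact ⟨by simpa using hne, transGen_prodDigraph_right E₁ u ht⟩
  · obtain ⟨hne, ht⟩ := h₁.1 _ _ h
    exact ⟨by simpa using hne, transGen_prodDigraph_left E₂ v ht⟩
  · obtain ⟨hne, ht⟩ := h₁.1 _ _ h
    exact ⟨by simp [hne], (transGen_prodDigraph_left E₂ v ht).trans
      (transGen_prodDigraph_right E₁ u' (h₂.1 _ _ h').2)⟩

lemma Set.ncard_diagonal (α : Type*) : (diagonal α).ncard = Nat.card α := by
  rw [← range_diag, ← image_univ, ncard_image_of_injective _ Function.diag_injective,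
    ncard_univ]

lemma setOf_prodSpanner_eq (H₁ : V₁ → V₁ → Prop) (H₂ : V₂ → V₂ → Prop) :
    {p : (V₁ × V₂) × (V₁ × V₂) | prodSpanner H₁ H₂ p.1 p.2} =
      Equiv.prodProdProdComm V₁ V₂ V₁ V₂ ⁻¹'
        (diagonal V₁ ×ˢ {p | H₂ p.1 p.2} ∪ {p | H₁ p.1 p.2} ×ˢ diagonal V₂ ∪
          {p | H₁ p.1 p.2} ×ˢ {p | H₂ p.1 p.2}) := by
  ext ⟨⟨u, v⟩, u', v'⟩
  simp only [prodSpanner, prodDigraph, mem_ofPred_eq, mem_preimage, mem_union, mem_prod,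
    mem_diagonal_iff, Equiv.prodProdProdComm_apply]
  tauto

lemma ncard_setOf_prodSpanner_le (H₁ : V₁ → V₁ → Prop) (H₂ : V₂ → V₂ → Prop) :
    {p : (V₁ × V₂) × (V₁ × V₂) | prodSpanner H₁ H₂ p.1 p.2}.ncard ≤
      {p : V₁ × V₁ | H₁ p.1 p.2}.ncard * {p : V₂ × V₂ | H₂ p.1 p.2}.ncard +
        Nat.card V₁ * {p : V₂ × V₂ | H₂ p.1 p.2}.ncard +
          Nat.card V₂ * {p : V₁ × V₁ | H₁ p.1 p.2}.ncard := by
  let e := Equiv.prodProdProdComm V₁ V₂ V₁ V₂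
  rw [setOf_prodSpanner_eq, ncard_preimage_of_injective_subset_range e.injective
    (e.surjective.range_eq ▸ subset_univ _)]
  refine (ncard_union_le _ _).trans ((add_le_add_left (ncard_union_le _ _) _).trans ?_)
  simp only [ncard_prod, ncard_diagonal]
  lia

lemma isTCSpanner_offDiag_transGen (E : V → V → Prop) {k : ℕ} (hk : 1 ≤ k) :
    IsTCSpanner E (fun u v => u ≠ v ∧ TransGen E u v) k := by
  refine ⟨fun u v h => h, fun u v h => ?_⟩
  obtain ⟨m, rfl⟩ := Nat.exists_eq_add_of_le' hk
  rcases reflTransGen_iff_eq_or_transGen.mp h with rfl | ht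
  · exact Or.inl rfl
  · by_cases huv : u = v
    · exact Or.inl huv
    · exact Or.inr ⟨v, ⟨huv, ht⟩, distLE_refl _ _ _⟩

lemma exists_isTCSpanner_ncard_eq_Sk (E : V → V → Prop) {k : ℕ} (hk : 1 ≤ k) :
    ∃ H : V → V → Prop, IsTCSpanner E H k ∧ {p : V × V | H p.1 p.2}.ncard = Sk E k := by
  have hne : {n | ∃ H : V → V → Prop, IsTCSpanner E H k ∧
      {p : V × V | H p.1 p.2}.ncard = n}.Nonempty :=
    ⟨_, _, isTCSpanner_offDiag_transGen E hk, rfl⟩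
  exact Nat.sInf_mem hne

lemma Sk_le_ncard {E H : V → V → Prop} {k : ℕ} (h : IsTCSpanner E H k) :
    Sk E k ≤ {p : V × V | H p.1 p.2}.ncard :=
  Nat.sInf_le ⟨H, h, rfl⟩

/-- `S_k(G₁ × G₂) ≤ S_k(G₁)·S_k(G₂) + n₁·S_k(G₂) + n₂·S_k(G₁)`. -/
theorem stmt12 {V₁ V₂ : Type} [Fintype V₁] [Fintype V₂]
    (E₁ : V₁ → V₁ → Prop) (E₂ : V₂ → V₂ → Prop) (k : ℕ) (hk : 1 ≤ k)
    (n₁ n₂ : ℕ) (hn₁ : n₁ = Fintype.card V₁) (hn₂ : n₂ = Fintype.card V₂) :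
    Sk (prodDigraph E₁ E₂) k ≤ Sk E₁ k * Sk E₂ k + n₁ * Sk E₂ k + n₂ * Sk E₁ k := by
  obtain ⟨H₁, hH₁, hc₁⟩ := exists_isTCSpanner_ncard_eq_Sk E₁ hk
  obtain ⟨H₂, hH₂, hc₂⟩ := exists_isTCSpanner_ncard_eq_Sk E₂ hk
  calc Sk (prodDigraph E₁ E₂) k
      ≤ {p : (V₁ × V₂) × (V₁ × V₂) | prodSpanner H₁ H₂ p.1 p.2}.ncard :=
        Sk_le_ncard (hH₁.prodSpanner hH₂)
    _ ≤ _ := ncard_setOf_prodSpanner_le H₁ H₂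
    _ = Sk E₁ k * Sk E₂ k + n₁ * Sk E₂ k + n₂ * Sk E₁ k := by
        rw [hc₁, hc₂, hn₁, hn₂, Nat.card_eq_fintype_card, Nat.card_eq_fintype_card]
end

section
/- There exists a constant c such that for all integers n, m ≥ 2, the directed grid on [n] × [m] has a 2-TC-spanner with at most c·n·m·(log₂ n)·(log₂ m) edges. -/
/-- The directed grid on `[n] × [m]` (vertices indexed by `Fin n × Fin m`): edges go from
`(i,j)` to `(i+1,j)` and from `(i,j)` to `(i,j+1)`. -/
def gridEdge (n m : ℕ) (x y : Fin n × Fin m) : Prop :=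
  ((y.1 : ℕ) = (x.1 : ℕ) + 1 ∧ y.2 = x.2) ∨ (y.1 = x.1 ∧ (y.2 : ℕ) = (x.2 : ℕ) + 1)

/-!
On the path `0 < 1 < ⋯ < n - 1`, keep the pair `(a, b)` when, for some `t`, `b` is the least
multiple of `2 ^ t` above `a` or `a` is the greatest multiple of `2 ^ t` up to `b`. Only
`t ≤ log₂ n + 1` matter, so there are `O(n log n)` such pairs. For `a < b` choose `t` so that
`(a, b]` contains exactly one multiple of `2 ^ t`: it is a hub reached from `a` and reaching `b`
in one step each. Reachability in the grid is the componentwise order, so the product of the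
two one-dimensional relations is a 2-TC-spanner of the grid with `O(n m log n log m)` edges.
-/

open Relation

lemma isTCSpanner_two_of_exists_hub {V : Type*} [PartialOrder V] {E S : V → V → Prop}
    (hE : ∀ u v, ReflTransGen E u v ↔ u ≤ v) (hS : ∀ u v, S u v → u ≤ v)
    (hub : ∀ u v, u ≤ v → ∃ w, S u w ∧ S w v) :
    IsTCSpanner E (fun u v => u ≠ v ∧ S u v) 2 := by
  refine ⟨fun u v ⟨huv, h⟩ => ⟨huv, ?_⟩, fun u v h => ?_⟩
  · exact ((reflTransGen_iff_eq_or_transGen.1 ((hE u v).2 (hS u v h))).resolve_left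
      (Ne.symm huv))
  · by_cases huv : u = v
    · exact Or.inl huv
    obtain ⟨w, hSuw, hSwv⟩ := hub u v ((hE u v).1 h)
    by_cases hwu : w = u
    · exact Or.inr ⟨v, ⟨huv, hwu ▸ hSwv⟩, Or.inl rfl⟩
    by_cases hwv : w = v
    · exact Or.inr ⟨v, ⟨huv, hwv ▸ hSuw⟩, Or.inl rfl⟩
    exact Or.inr ⟨w, ⟨Ne.symm hwu, hSuw⟩, Or.inr ⟨v, ⟨hwv, hSwv⟩, rfl⟩⟩

lemma gridEdge_iff_covBy {n m : ℕ} {x y : Fin n × Fin m} : gridEdge n m x y ↔ x ⋖ y := by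
  simp only [gridEdge, Prod.covBy_iff, Fin.covBy_iff, Order.covBy_iff_add_one_eq, eq_comm]
  tauto

lemma reflTransGen_gridEdge_iff {n m : ℕ} {x y : Fin n × Fin m} :
    ReflTransGen (gridEdge n m) x y ↔ x ≤ y := by
  have : gridEdge n m = (· ⋖ ·) := by ext; exact gridEdge_iff_covBy
  rw [le_iff_reflTransGen_covBy, this]

lemma Set.ncard_le_of_injOn_fst {α β : Type*} [Finite α] {s : Set (α × β)}
    (h : s.InjOn Prod.fst) : s.ncard ≤ Nat.card α :=
  (Set.ncard_le_ncard_of_injOn Prod.fst (fun _ _ => Set.mem_univ _) h).trans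
    (Set.ncard_univ α).le

lemma Set.ncard_le_of_injOn_snd {α β : Type*} [Finite β] {s : Set (α × β)}
    (h : s.InjOn Prod.snd) : s.ncard ≤ Nat.card β :=
  (Set.ncard_le_ncard_of_injOn Prod.snd (fun _ _ => Set.mem_univ _) h).trans
    (Set.ncard_univ β).le

lemma Set.ncard_setOf_prod_rel {α β : Type*} (R : α → α → Prop) (S : β → β → Prop) :
    {p : (α × β) × (α × β) | R p.1.1 p.2.1 ∧ S p.1.2 p.2.2}.ncard =
      {p : α × α | R p.1 p.2}.ncard * {p : β × β | S p.1 p.2}.ncard := by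
  rw [← Set.ncard_prod, ← Set.ncard_preimage_of_injective_subset_range
    (Equiv.prodProdProdComm α β α β).injective (by simp)]
  rfl

def dyadicHop (a b : ℕ) : Prop :=
  ∃ t, b = (a / 2 ^ t + 1) * 2 ^ t ∨ a = b / 2 ^ t * 2 ^ t

lemma dyadicHop.le {a b : ℕ} (h : dyadicHop a b) : a ≤ b := by
  obtain ⟨t, rfl | rfl⟩ := h
  · rw [add_mul, one_mul]
    exact (Nat.lt_div_mul_add (by positivity)).le
  · exact Nat.div_mul_le_self b _

lemma Nat.exists_div_two_pow_add_one_eq_s13 {a b : ℕ} (h : a < b) :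
    ∃ t, a / 2 ^ t + 1 = b / 2 ^ t := by
  induction b using Nat.strong_induction_on generalizing a with
  | _ b ih =>
    rcases (Nat.div_le_div_right (c := 2) h.le).eq_or_lt with h2 | h2
    · exact ⟨0, by simp only [pow_zero, Nat.div_one]; omega⟩
    · obtain ⟨t, ht⟩ := ih (b / 2) (by omega) h2
      exact ⟨t + 1, by simpa [pow_succ', Nat.div_div_eq_div_mul] using ht⟩

lemma exists_dyadicHop_hub {a b : ℕ} (h : a ≤ b) : ∃ c, dyadicHop a c ∧ dyadicHop c b := by
  rcases h.eq_or_lt with rfl | h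
  · exact ⟨a, ⟨0, by simp⟩, ⟨0, by simp⟩⟩
  obtain ⟨t, ht⟩ := Nat.exists_div_two_pow_add_one_eq_s13 h
  refine ⟨(a / 2 ^ t + 1) * 2 ^ t, ⟨t, Or.inl rfl⟩, ⟨t, Or.inr ?_⟩⟩
  rw [ht]

lemma exists_fin_dyadicHop_hub {n : ℕ} {a b : Fin n} (h : a ≤ b) :
    ∃ c : Fin n, dyadicHop a c ∧ dyadicHop c b := by
  obtain ⟨c, hac, hcb⟩ := exists_dyadicHop_hub (Fin.le_def.1 h)
  exact ⟨⟨c, hcb.le.trans_lt b.isLt⟩, hac, hcb⟩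

lemma exists_lt_log_of_dyadicHop {n a b : ℕ} (hb : b < n) (h : dyadicHop a b) :
    ∃ t < Nat.log 2 n + 2, b = (a / 2 ^ t + 1) * 2 ^ t ∨ a = b / 2 ^ t * 2 ^ t := by
  obtain ⟨t, hup | hdown⟩ := h
  · have : 2 ^ t < n := by
      calc 2 ^ t ≤ (a / 2 ^ t + 1) * 2 ^ t := Nat.le_mul_of_pos_left _ (Nat.succ_pos _)
        _ = b := hup.symm
        _ < n := hb
    exact ⟨t, by linarith [Nat.le_log_of_pow_le one_lt_two this.le], Or.inl hup⟩
  rcases lt_or_ge t (Nat.log 2 n + 2) with ht | ht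
  · exact ⟨t, ht, Or.inr hdown⟩
  -- beyond `log₂ n` every `b < n` rounds down to `0`
  have hb' : b < 2 ^ (Nat.log 2 n + 1) := hb.trans (Nat.lt_pow_succ_log_self one_lt_two n)
  refine ⟨Nat.log 2 n + 1, by omega, Or.inr ?_⟩
  rw [hdown, Nat.div_eq_of_lt (hb'.trans_le (Nat.pow_le_pow_right two_pos (by omega))),
    Nat.div_eq_of_lt hb', zero_mul, zero_mul]

lemma ncard_dyadicHop_le (n : ℕ) :
    {p : Fin n × Fin n | dyadicHop p.1 p.2}.ncard ≤ n * (2 * Nat.log 2 n + 4) := by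
  let up (t : ℕ) : Set (Fin n × Fin n) := {p | (p.2 : ℕ) = (p.1 / 2 ^ t + 1) * 2 ^ t}
  let down (t : ℕ) : Set (Fin n × Fin n) := {p | (p.1 : ℕ) = p.2 / 2 ^ t * 2 ^ t}
  have hsub : {p : Fin n × Fin n | dyadicHop p.1 p.2} ⊆
      ⋃ t ∈ Finset.range (Nat.log 2 n + 2), (up t ∪ down t) := by
    rintro ⟨a, b⟩ h
    obtain ⟨t, ht, h⟩ := exists_lt_log_of_dyadicHop b.isLt h
    exact Set.mem_biUnion (Finset.mem_range.2 ht) h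
  have hcard (t : ℕ) : (up t ∪ down t).ncard ≤ 2 * n := by
    have hup : (up t).ncard ≤ n := by
      refine (Set.ncard_le_of_injOn_fst fun p (hp : _ = _) q (hq : _ = _) h => ?_).trans_eq
        (Nat.card_fin n)
      exact Prod.ext h (Fin.ext <| by rw [hp, hq, h])
    have hdown : (down t).ncard ≤ n := by
      refine (Set.ncard_le_of_injOn_snd fun p (hp : _ = _) q (hq : _ = _) h => ?_).trans_eq
        (Nat.card_fin n)
      exact Prod.ext (Fin.ext <| by rw [hp, hq, h]) h
    linarith [Set.ncard_union_le (up t) (down t)]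
  calc _ ≤ (⋃ t ∈ Finset.range (Nat.log 2 n + 2), (up t ∪ down t)).ncard :=
        Set.ncard_le_ncard hsub
    _ ≤ ∑ t ∈ Finset.range (Nat.log 2 n + 2), (up t ∪ down t).ncard :=
        Finset.set_ncard_biUnion_le _ _
    _ ≤ ∑ t ∈ Finset.range (Nat.log 2 n + 2), 2 * n := Finset.sum_le_sum fun t _ => hcard t
    _ = n * (2 * Nat.log 2 n + 4) := by rw [Finset.sum_const, Finset.card_range, smul_eq_mul]; ring

def gridHop (n m : ℕ) (u v : Fin n × Fin m) : Prop :=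
  dyadicHop u.1 v.1 ∧ dyadicHop u.2 v.2

lemma isTCSpanner_gridHop (n m : ℕ) :
    IsTCSpanner (gridEdge n m) (fun u v => u ≠ v ∧ gridHop n m u v) 2 := by
  refine isTCSpanner_two_of_exists_hub (fun _ _ => reflTransGen_gridEdge_iff)
    (fun _ _ h => Prod.mk_le_mk.2 ⟨Fin.le_def.2 h.1.le, Fin.le_def.2 h.2.le⟩) fun u v h => ?_
  obtain ⟨c₁, huc₁, hc₁v⟩ := exists_fin_dyadicHop_hub h.1
  obtain ⟨c₂, huc₂, hc₂v⟩ := exists_fin_dyadicHop_hub h.2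
  exact ⟨(c₁, c₂), ⟨huc₁, huc₂⟩, ⟨hc₁v, hc₂v⟩⟩

lemma ncard_gridHop_le (n m : ℕ) :
    {p : (Fin n × Fin m) × (Fin n × Fin m) | gridHop n m p.1 p.2}.ncard ≤
      n * (2 * Nat.log 2 n + 4) * (m * (2 * Nat.log 2 m + 4)) :=
  (Set.ncard_setOf_prod_rel (fun a b : Fin n => dyadicHop a b)
    (fun a b : Fin m => dyadicHop a b)).trans_le
      (Nat.mul_le_mul (ncard_dyadicHop_le n) (ncard_dyadicHop_le m))

lemma two_mul_natLog_add_four_le_logb {n : ℕ} (hn : 2 ≤ n) :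
    (2 * Nat.log 2 n + 4 : ℝ) ≤ 6 * Real.logb 2 n := by
  have hlog : (1 : ℝ) ≤ Real.logb 2 n := by
    rw [Real.le_logb_iff_rpow_le one_lt_two (by positivity), Real.rpow_one]
    exact_mod_cast hn
  have hnat := Real.natLog_le_logb n 2
  push_cast at hnat
  linarith

/-- There is a constant `c` such that the directed `[n] × [m]` grid has a 2-TC-spanner with
at most `c · n · m · (log₂ n) · (log₂ m)` edges. -/
theorem stmt13 :
    ∃ c : ℝ, ∀ n m : ℕ, 2 ≤ n → 2 ≤ m →
      ∃ H : (Fin n × Fin m) → (Fin n × Fin m) → Prop,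
        IsTCSpanner (gridEdge n m) H 2 ∧
        (({p : (Fin n × Fin m) × (Fin n × Fin m) | H p.1 p.2}).ncard : ℝ) ≤
          c * n * m * Real.logb 2 n * Real.logb 2 m := by
  refine ⟨36, fun n m hn hm =>
    ⟨fun u v => u ≠ v ∧ gridHop n m u v, isTCSpanner_gridHop n m, ?_⟩⟩
  have hsub : {p : (Fin n × Fin m) × (Fin n × Fin m) | p.1 ≠ p.2 ∧ gridHop n m p.1 p.2} ⊆
      {p | gridHop n m p.1 p.2} := fun _ h => h.2
  have hcard := (Set.ncard_le_ncard hsub).trans (ncard_gridHop_le n m)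
  calc _ ≤ (n * (2 * Nat.log 2 n + 4) * (m * (2 * Nat.log 2 m + 4)) : ℝ) := by
        exact_mod_cast hcard
    _ ≤ n * (6 * Real.logb 2 n) * (m * (6 * Real.logb 2 m)) := by
        have hlog_n := two_mul_natLog_add_four_le_logb hn
        have hlog_m := two_mul_natLog_add_four_le_logb hm
        gcongr
        exact mul_nonneg n.cast_nonneg (le_trans (by positivity) hlog_n)
    _ = 36 * n * m * Real.logb 2 n * Real.logb 2 m := by ring
end

section
/- Let d ≥ 1 and let 0 ≤ i < j ≤ d and i ≤ k ≤ j be integers. Then there exists a set S of vertices of the Boolean hypercube {0,1}^d, each of Hamming weight k, with |S| ≤ ⌈3d·C(d,k)/C(j−i,k−i)⌉, such that for every pair of vertices x, y ∈ {0,1}^d with |x| = i, |y| = j and x ≺ y, there exists v ∈ S with x ≼ v ≼ y. Here C(a,b) denotes the binomial coefficient. -/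
/-- Hamming weight of a Boolean vector. -/
def hammingWeight {d : ℕ} (x : Fin d → Bool) : ℕ :=
  (Finset.univ.filter fun t => x t = true).card

/-- The coordinatewise partial order on the Boolean hypercube. -/
def cubeLe {d : ℕ} (x y : Fin d → Bool) : Prop :=
  ∀ t, x t = true → y t = true

/-!
Probabilistic method. Let `c = C(j-i, k-i)` and `m = ⌈3d·C(d,k)/c⌉`. For a comparable pair
`x ≺ y` exactly `c` of the `C(d,k)` vertices of weight `k` lie between `x` and `y`, so a uniformly
random `m`-tuple of weight-`k` vertices misses that interval with probability
`(1 - c/C(d,k))^m ≤ e^{-3d}`. There are fewer than `4^d < e^{3d}` pairs, so by the union bound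
some tuple meets every interval; its entries form `S`. The argument is run as a count of tuples.
-/

open Finset Real

theorem mul_sub_pow_lt_pow_of_lt_exp {P N c m : ℕ} (hN : 0 < N) (hcN : c ≤ N)
    (hP : (P : ℝ) < exp (m * c / N)) : P * (N - c) ^ m < N ^ m := by
  have hNR : (0 : ℝ) < N := by exact_mod_cast hN
  have one_sub_pow : (1 - (c : ℝ) / N) ^ m ≤ exp (-(m * c / N)) := calc
    (1 - (c : ℝ) / N) ^ m ≤ exp (-(c / N)) ^ m := by
      gcongr
      · rw [sub_nonneg, div_le_one hNR]; exact_mod_cast hcN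
      · exact one_sub_le_exp_neg _
    _ = exp (-(m * c / N)) := by rw [← exp_nat_mul]; ring_nf
  have key : ((P * (N - c) ^ m : ℕ) : ℝ) < (N ^ m : ℕ) := calc
    ((P * (N - c) ^ m : ℕ) : ℝ) = P * N ^ m * (1 - (c : ℝ) / N) ^ m := by
      rw [Nat.cast_mul, Nat.cast_pow, Nat.cast_sub hcN, mul_assoc, ← mul_pow]
      congr 2; field_simp
    _ ≤ P * N ^ m * exp (-(m * c / N)) := mul_le_mul_of_nonneg_left one_sub_pow (by positivity)
    _ < exp (m * c / N) * N ^ m * exp (-(m * c / N)) := by gcongr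
    _ = (N ^ m : ℕ) := by rw [mul_right_comm, ← exp_add]; simp
  exact_mod_cast key

theorem four_pow_lt_exp {n : ℕ} (hn : n ≠ 0) : (4 : ℝ) ^ n < exp (3 * n) := calc
  (4 : ℝ) ^ n < exp 3 ^ n := by
    gcongr
    linarith [add_one_lt_exp (three_ne_zero (α := ℝ))]
  _ = exp (3 * n) := by rw [← exp_nat_mul, mul_comm]

section Hitting

variable {α ι : Type*} [DecidableEq α]

theorem exists_hitting_subset_of_card_mul_pow_lt (U : Finset α) (P : Finset ι)
    (G : ι → Finset α) (hGU : ∀ p ∈ P, G p ⊆ U) {c m : ℕ} (hc : ∀ p ∈ P, c ≤ #(G p))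
    (hP : #P * (#U - c) ^ m < #U ^ m) :
    ∃ S ⊆ U, #S ≤ m ∧ ∀ p ∈ P, ∃ v ∈ S, v ∈ G p := by
  let missing : ι → Finset (Fin m → α) := fun p => Fintype.piFinset fun _ => U \ G p
  have card_missing :
      #(P.biUnion missing) < #(Fintype.piFinset fun _ : Fin m => U) := calc
    #(P.biUnion missing) ≤ ∑ p ∈ P, #(missing p) := card_biUnion_le
    _ ≤ ∑ p ∈ P, (#U - c) ^ m := sum_le_sum fun p hp => by
        simp only [missing, Fintype.card_piFinset, prod_const, card_univ, Fintype.card_fin,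
          card_sdiff_of_subset (hGU p hp)]
        exact Nat.pow_le_pow_left (Nat.sub_le_sub_left (hc p hp) _) m
    _ = #P * (#U - c) ^ m := by rw [sum_const, smul_eq_mul]
    _ < #(Fintype.piFinset fun _ : Fin m => U) := by simpa using hP
  obtain ⟨f, hfU, hf⟩ := exists_mem_notMem_of_card_lt_card card_missing
  rw [Fintype.mem_piFinset] at hfU
  refine ⟨univ.image f, by simpa [image_subset_iff] using hfU, card_image_le.trans (by simp),
    fun p hp => ?_⟩
  have : f ∉ missing p := fun h => hf (mem_biUnion.2 ⟨p, hp, h⟩)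
  simp only [missing, Fintype.mem_piFinset, mem_sdiff, not_forall, not_and, not_not] at this
  obtain ⟨t, ht⟩ := this
  exact ⟨f t, mem_image_of_mem f (mem_univ t), ht (hfU t)⟩

theorem exists_hitting_subset_of_card_lt_exp (U : Finset α) (P : Finset ι)
    (G : ι → Finset α) (hGU : ∀ p ∈ P, G p ⊆ U) {c m : ℕ} (hc₀ : 0 < c)
    (hc : ∀ p ∈ P, c ≤ #(G p)) (hP : (#P : ℝ) < exp (m * c / #U)) :
    ∃ S ⊆ U, #S ≤ m ∧ ∀ p ∈ P, ∃ v ∈ S, v ∈ G p := by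
  obtain rfl | ⟨p, hp⟩ := P.eq_empty_or_nonempty
  · exact ⟨∅, empty_subset U, by simp, by simp⟩
  have hcU : c ≤ #U := (hc p hp).trans (card_le_card (hGU p hp))
  exact exists_hitting_subset_of_card_mul_pow_lt U P G hGU hc
    (mul_sub_pow_lt_pow_of_lt_exp (hc₀.trans_le hcU) hcU hP)

end Hitting

theorem exists_small_kset_family_meeting_intervals {α : Type*} [Fintype α] [DecidableEq α]
    {i j k : ℕ} (hα : 0 < Fintype.card α) (hik : i ≤ k) (hkj : k ≤ j)
    (hkα : k ≤ Fintype.card α) :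
    ∃ S : Finset (Finset α), (∀ v ∈ S, #v = k) ∧
      #S ≤ ⌈(3 * Fintype.card α * (Fintype.card α).choose k : ℝ) /
        ((j - i).choose (k - i) : ℝ)⌉₊ ∧
      ∀ A B : Finset α, #A = i → #B = j → A ⊆ B → ∃ v ∈ S, A ⊆ v ∧ v ⊆ B := by
  set d := Fintype.card α
  set c := (j - i).choose (k - i)
  set m := ⌈(3 * d * d.choose k : ℝ) / c⌉₊
  let P : Finset (Finset α × Finset α) := {p | #p.1 = i ∧ #p.2 = j ∧ p.1 ⊆ p.2}
  let G : Finset α × Finset α → Finset (Finset α) := fun p =>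
    (p.2.powersetCard k).filter (p.1 ⊆ ·)
  have hc₀ : 0 < c := Nat.choose_pos (Nat.sub_le_sub_right hkj i)
  have card_G : ∀ p ∈ P, #(G p) = c := by
    intro p hp
    simp only [P, mem_filter, mem_univ, true_and] at hp
    rw [card_filter_powersetCard_subset _ _ _ hp.2.2 (hp.1 ▸ hik), hp.1, hp.2.1]
  have card_P : (#P : ℝ) ≤ 4 ^ d := by
    have : #P ≤ 4 ^ d := calc
      #P ≤ Fintype.card (Finset α × Finset α) := card_le_univ P
      _ = 4 ^ d := by simp [d, Fintype.card_finset, ← mul_pow]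
    exact_mod_cast this
  have hm : 3 * d ≤ m * c / (#(univ.powersetCard k : Finset (Finset α)) : ℝ) := by
    have hC : (0 : ℝ) < d.choose k := by exact_mod_cast Nat.choose_pos hkα
    rw [card_powersetCard, card_univ, le_div_iff₀ hC, ← div_le_iff₀ (by exact_mod_cast hc₀)]
    exact Nat.le_ceil _
  obtain ⟨S, hSU, hSm, hS⟩ := exists_hitting_subset_of_card_lt_exp (univ.powersetCard k) P G
    (fun p _ => (filter_subset _ _).trans (powersetCard_mono (subset_univ _))) hc₀
    (fun p hp => (card_G p hp).ge)
    (card_P.trans_lt ((four_pow_lt_exp hα.ne').trans_le (exp_le_exp.2 (by exact_mod_cast hm))))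
  refine ⟨S, fun v hv => (mem_powersetCard.1 (hSU hv)).2, hSm, fun A B hA hB hAB => ?_⟩
  obtain ⟨v, hvS, hv⟩ := hS (A, B) (by simp [P, hA, hB, hAB])
  simp only [G, mem_filter, mem_powersetCard] at hv
  exact ⟨v, hvS, hv.2, hv.1.1⟩

namespace Hypercube

variable {d : ℕ}

def support (x : Fin d → Bool) : Finset (Fin d) := {t | x t = true}

theorem hammingWeight_eq_card_support (x : Fin d → Bool) : hammingWeight x = #(support x) := rfl

theorem cubeLe_iff_support_subset {x y : Fin d → Bool} :
    cubeLe x y ↔ support x ⊆ support y := by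
  simp [cubeLe, support, subset_iff]

theorem support_decide_mem (K : Finset (Fin d)) : support (fun t => decide (t ∈ K)) = K := by
  ext; simp [support]

end Hypercube

open Hypercube in
theorem stmt14_general (d i j k : ℕ) (hij : i < j) (hjd : j ≤ d)
    (hik : i ≤ k) (hkj : k ≤ j) :
    ∃ S : Finset (Fin d → Bool),
      (∀ v ∈ S, hammingWeight v = k) ∧
      S.card ≤ ⌈(3 * d * (d.choose k) : ℝ) / (((j - i).choose (k - i) : ℝ))⌉₊ ∧
      ∀ x y : Fin d → Bool, hammingWeight x = i → hammingWeight y = j →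
        cubeLe x y → x ≠ y → ∃ v ∈ S, cubeLe x v ∧ cubeLe v y := by
  obtain ⟨S, hSk, hSm, hS⟩ := exists_small_kset_family_meeting_intervals (α := Fin d)
    (i := i) (j := j) (by rw [Fintype.card_fin]; omega) hik hkj (by rw [Fintype.card_fin]; omega)
  simp only [Fintype.card_fin] at hSm
  refine ⟨S.image fun K t => decide (t ∈ K), ?_, card_image_le.trans hSm, ?_⟩
  · simp only [mem_image, forall_exists_index, and_imp]
    rintro _ K hK rfl
    rw [hammingWeight_eq_card_support, support_decide_mem, hSk K hK]
  · intro x y hx hy hxy _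
    obtain ⟨K, hK, hxK, hKy⟩ := hS _ _ hx hy (cubeLe_iff_support_subset.1 hxy)
    refine ⟨_, mem_image_of_mem _ hK, ?_, ?_⟩ <;>
      rwa [cubeLe_iff_support_subset, support_decide_mem]

/-- For `0 ≤ i < j ≤ d` and `i ≤ k ≤ j` there is a set `S` of vertices of `{0,1}^d`, each of
Hamming weight `k`, of size at most `⌈3d·C(d,k)/C(j-i,k-i)⌉`, such that every comparable pair
`x ≺ y` with `|x| = i`, `|y| = j` has some `v ∈ S` with `x ≼ v ≼ y`. -/
theorem stmt14 (d i j k : ℕ) (hd : 1 ≤ d) (hij : i < j) (hjd : j ≤ d)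
    (hik : i ≤ k) (hkj : k ≤ j) :
    ∃ S : Finset (Fin d → Bool),
      (∀ v ∈ S, hammingWeight v = k) ∧
      S.card ≤ ⌈(3 * d * (d.choose k) : ℝ) / (((j - i).choose (k - i) : ℝ))⌉₊ ∧
      ∀ x y : Fin d → Bool, hammingWeight x = i → hammingWeight y = j →
        cubeLe x y → x ≠ y → ∃ v ∈ S, cubeLe x v ∧ cubeLe v y :=
  stmt14_general d i j k hij hjd hik hkj
end

section
/- For all integers m ≥ 1 and d ≥ 1 and every real number V ≥ 0, the number of points q ∈ {1,…,m}^d with ∏_{i=1}^d q_i ≤ V is at most V·H_m^{d−1}, where H_m = Σ_{i=1}^m 1/i is the m-th harmonic number. -/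
/-! Fibre the points over their last `d - 1` coordinates `t`: the fibre of `t` consists of the
first coordinates `k` with `k ≤ V / ∏ tᵢ`, so it has at most `V / ∏ tᵢ` elements. Summing over
all `t` and expanding `H_m^(d-1) = (∑ₖ 1/k)^(d-1)` as a sum over `t` of `∏ 1/tᵢ` gives the bound. -/

open Finset

lemma card_filter_val_add_one_le (m : ℕ) {W : ℝ} (hW : 0 ≤ W) :
    (#{k : Fin m | ((k : ℕ) : ℝ) + 1 ≤ W} : ℝ) ≤ W := by
  have hcard : #{k : Fin m | ((k : ℕ) : ℝ) + 1 ≤ W} ≤ #(range ⌊W⌋₊) := by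
    refine card_le_card_of_injOn Fin.val (fun k hk => ?_) Fin.val_injective.injOn
    have hk : (((k : ℕ) + 1 : ℕ) : ℝ) ≤ W := by exact_mod_cast (mem_filter.mp hk).2
    exact mem_range.mpr (Nat.le_floor hk)
  calc (#{k : Fin m | ((k : ℕ) : ℝ) + 1 ≤ W} : ℝ) ≤ ⌊W⌋₊ := by
        simpa using (Nat.cast_le (α := ℝ)).mpr hcard
    _ ≤ W := Nat.floor_le hW

lemma card_filter_fin_succ_eq_sum {β : Type*} [Fintype β] {n : ℕ}
    (p : (Fin (n + 1) → β) → Prop) [DecidablePred p] :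
    #{q | p q} = ∑ t : Fin n → β, #{k | p (Fin.cons k t)} := by
  simp only [card_filter]
  rw [← (Fin.consEquiv fun _ => β).sum_comp, Fintype.sum_prod_type, sum_comm]
  rfl

lemma card_filter_prod_add_one_le (m n : ℕ) {V : ℝ} (hV : 0 ≤ V) :
    (#{q : Fin (n + 1) → Fin m | ∏ i, (((q i : ℕ) : ℝ) + 1) ≤ V} : ℝ) ≤
      V * (∑ k : Fin m, 1 / (((k : ℕ) : ℝ) + 1)) ^ n := by
  set P : (Fin n → Fin m) → ℝ := fun t => ∏ i, (((t i : ℕ) : ℝ) + 1)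
  have hP : ∀ t, 0 < P t := fun t => prod_pos fun i _ => by positivity
  calc (#{q : Fin (n + 1) → Fin m | ∏ i, (((q i : ℕ) : ℝ) + 1) ≤ V} : ℝ)
      = ∑ t, (#{k : Fin m | ((k : ℕ) : ℝ) + 1 ≤ V / P t} : ℝ) := by
        rw [card_filter_fin_succ_eq_sum]
        push_cast
        simp only [Fin.prod_univ_succ, Fin.cons_zero, Fin.cons_succ, le_div_iff₀ (hP _), P]
    _ ≤ ∑ t, V / P t :=
        sum_le_sum fun t _ => card_filter_val_add_one_le m (div_nonneg hV (hP t).le)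
    _ = V * ∑ t : Fin n → Fin m, ∏ i, 1 / (((t i : ℕ) : ℝ) + 1) := by
        simp only [mul_sum, P, prod_div_distrib, prod_const_one, div_eq_mul_one_div V]
    _ = V * (∑ k : Fin m, 1 / (((k : ℕ) : ℝ) + 1)) ^ n := by
        rw [Fintype.sum_pow]

lemma sum_fin_one_div_add_one_eq_sum_Icc (m : ℕ) :
    ∑ k : Fin m, 1 / (((k : ℕ) : ℝ) + 1) = ∑ i ∈ Icc 1 m, (1 : ℝ) / i := by
  rw [Fin.sum_univ_eq_sum_range (fun k => 1 / ((k : ℝ) + 1)), ← Ico_add_one_right_eq_Icc,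
    sum_Ico_eq_sum_range]
  simp [add_comm]

/-- `q : Fin d → Fin m` encodes the point with coordinates `q i + 1 ∈ {1,…,m}`. -/
theorem stmt18_general (m d : ℕ) (hd : 1 ≤ d) (V : ℝ) (hV : 0 ≤ V) :
    (({q : Fin d → Fin m | (∏ i, ((q i : ℕ) + 1 : ℝ)) ≤ V}).ncard : ℝ) ≤
      V * (∑ i ∈ Finset.Icc 1 m, (1 : ℝ) / i) ^ (d - 1) := by
  obtain ⟨n, rfl⟩ := Nat.exists_eq_add_of_le' hd
  rw [Set.ncard_eq_toFinset_card', Set.toFinset_ofPred, Nat.add_sub_cancel,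
    ← sum_fin_one_div_add_one_eq_sum_Icc]
  exact card_filter_prod_add_one_le m n hV

/-- The number of points `q ∈ {1,…,m}^d` (encoded as `q : Fin d → Fin m` with coordinates
`q i + 1 ∈ {1,…,m}`) whose coordinate product is at most `V` is at most `V·H_m^(d-1)`,
where `H_m` is the `m`-th harmonic number. -/
theorem stmt18 (m d : ℕ) (hm : 1 ≤ m) (hd : 1 ≤ d) (V : ℝ) (hV : 0 ≤ V) :
    (({q : Fin d → Fin m | (∏ i, ((q i : ℕ) + 1 : ℝ)) ≤ V}).ncard : ℝ) ≤
      V * (∑ i ∈ Finset.Icc 1 m, (1 : ℝ) / i) ^ (d - 1) :=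
  stmt18_general m d hd V hV
end
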